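/- Let α ∈ ℂ and let A be ℂ³ with standard basis e₁, e₂, e₃ and the unique antisymmetric bilinear map [·,·] : A × A → A with [e₁,e₂] = e₁, [e₁,e₃] = e₁ + e₂, [e₂,e₃] = e₃ + α e₁ (the 3-dimensional simple ω-Lie algebra A_α). If f : A → A is a 2-local ½-derivation, i.e. a (not necessarily linear) map such that for all x, y ∈ A there exists a ½-derivation Δ of (A, [·,·]) with f(x) = Δ(x) and f(y) = Δ(y), then there exists λ ∈ ℂ such that f(x) = λ x for all x ∈ A; in particular f is a ½-derivation. -/
import Mathlib


/-- The bracket of the 3-dimensional simple ω-Lie algebra `A_α` on `ℂ³`: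
`[e₁,e₂] = e₁`, `[e₁,e₃] = e₁ + e₂`, `[e₂,e₃] = e₃ + α e₁`. -/
noncomputable def brA (α : ℂ) (x y : Fin 3 → ℂ) : Fin 3 → ℂ :=
  ![(x 0 * y 1 - x 1 * y 0) + (x 0 * y 2 - x 2 * y 0) + α * (x 1 * y 2 - x 2 * y 1),
    x 0 * y 2 - x 2 * y 0,
    x 1 * y 2 - x 2 * y 1]

/-- A ½-derivation of `A_α`. -/
def IsHalfDerivA (α : ℂ) (Δ : (Fin 3 → ℂ) →ₗ[ℂ] (Fin 3 → ℂ)) : Prop :=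
  ∀ x y : Fin 3 → ℂ,
    Δ (brA α x y) = (1 / 2 : ℂ) • (brA α (Δ x) y + brA α x (Δ y))

lemma halfderiv_scalar (α : ℂ) (Δ : (Fin 3 → ℂ) →ₗ[ℂ] (Fin 3 → ℂ))
    (hΔ : IsHalfDerivA α Δ) (x : Fin 3 → ℂ) : Δ x = (Δ ![1,0,0] 0) • x := by
  have b1 : brA α ![(1:ℂ),0,0] ![0,1,0] = ![1,0,0] := by
    funext i; fin_cases i <;> simp [brA]
  have b2 : brA α ![(1:ℂ),0,0] ![0,0,1] = ![1,1,0] := by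
    funext i; fin_cases i <;> simp [brA]
  have b3 : brA α ![(0:ℂ),1,0] ![0,0,1] = ![α,0,1] := by
    funext i; fin_cases i <;> simp [brA]
  have h1 := hΔ ![1,0,0] ![0,1,0]
  have h2 := hΔ ![1,0,0] ![0,0,1]
  have h3 := hΔ ![0,1,0] ![0,0,1]
  rw [b1] at h1; rw [b2] at h2; rw [b3] at h3
  set u := Δ ![1,0,0] with hu
  set v := Δ ![0,1,0] with hv
  set w := Δ ![0,0,1] with hw
  have hb2 : Δ ![(1:ℂ),1,0] = u + v := by
    have h : (![(1:ℂ),1,0] : Fin 3 → ℂ) = ![1,0,0] + ![0,1,0] := by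
      funext i; fin_cases i <;> simp
    rw [h, map_add]
  have hb3 : Δ ![(α:ℂ),0,1] = α • u + w := by
    have h : (![(α:ℂ),0,1] : Fin 3 → ℂ) = α • ![1,0,0] + ![0,0,1] := by
      funext i; fin_cases i <;> simp
    rw [h, map_add, map_smul]
  rw [hb2] at h2; rw [hb3] at h3
  have e10 := congrFun h1 0
  have e11 := congrFun h1 1
  have e12 := congrFun h1 2
  have e20 := congrFun h2 0
  have e21 := congrFun h2 1
  have e22 := congrFun h2 2
  have e30 := congrFun h3 0
  have e31 := congrFun h3 1
  have e32 := congrFun h3 2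
  simp [brA] at e10 e11 e12 e20 e21 e22 e30 e31 e32
  have hu2 : u 2 = 0 := by linear_combination (2/3 : ℂ) * e12
  have hu1 : u 1 = 0 := by
    linear_combination (4/3 : ℂ) * e11 + (2/3 : ℂ) * e22 - (2/3 : ℂ) * hu2
  have hv2 : v 2 = 0 := by linear_combination (-2 : ℂ) * e11 + 2 * hu1
  have hw2v1 : w 2 = v 1 := by linear_combination 2 * e32 - 2 * α * hu2
  have hv1 : v 1 = u 0 := by linear_combination 2 * e21 + hw2v1 - 2 * hu1
  have hw2 : w 2 = u 0 := by linear_combination hw2v1 + hv1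
  have hv0 : v 0 = 0 := by
    linear_combination (4/3 : ℂ) * e20 + (2/3 : ℂ) * e31 + (2/3 : ℂ) * hw2
  have hw1 : w 1 = 0 := by linear_combination e31 - α * hu1 + (1/2 : ℂ) * hv0
  have hw0 : w 0 = 0 := by
    linear_combination (2/3 : ℂ) * e30 + (1/3 : ℂ) * hv0 + (α/3) * hv1 + (α/3) * hw2
  have hx : x = x 0 • ![1,0,0] + x 1 • ![0,1,0] + x 2 • ![0,0,1] := by
    funext i; fin_cases i <;> simp
  have hΔx : Δ x = x 0 • u + x 1 • v + x 2 • w := by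
    conv_lhs => rw [hx]
    rw [map_add, map_add, map_smul, map_smul, map_smul]
  rw [hΔx]
  funext i
  fin_cases i <;>
    simp [hu1, hu2, hv0, hv1, hv2, hw0, hw1, hw2] <;> ring

/-- Every 2-local ½-derivation of `A_α` is a scalar multiple of the
identity (in particular, a ½-derivation). -/
theorem stmt_19 (α : ℂ) (f : (Fin 3 → ℂ) → (Fin 3 → ℂ))
    (hloc : ∀ x y : Fin 3 → ℂ, ∃ Δ : (Fin 3 → ℂ) →ₗ[ℂ] (Fin 3 → ℂ),
      IsHalfDerivA α Δ ∧ f x = Δ x ∧ f y = Δ y) :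
    ∃ lam : ℂ, ∀ x : Fin 3 → ℂ, f x = lam • x := by
  refine ⟨f ![1,0,0] 0, fun x => ?_⟩
  obtain ⟨Δ, hΔ, h1, h2⟩ := hloc ![1,0,0] x
  rw [h2, halfderiv_scalar α Δ hΔ x, congrFun h1 0]
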